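/- Case (a) of the Dubins heuristic: for a pose with heading φ ∈ [0, π/2] relative to a vertical goal line x = x_goal, turning radius r, turning center x-coordinate x_c = x + r·cos(φ) ≤ x_goal, and CS path with exit angle θ ∈ (0, π/2], the total path length L(θ) = r·(φ − θ) + (x_goal − x − r·(cos(φ) − cos(θ)))/sin(θ) is minimized over θ ∈ (0, π/2] at θ = π/2; that is, for all θ ∈ (0, π/2], r·(φ − θ) + (x_goal − x − r·(cos φ − cos θ))/sin θ ≥ r·(φ − π/2) + (x_goal − x − r·cos φ). -/
import Mathlib

open Real

/-- Case (a) of the Dubins heuristic: the CS path length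
`L(θ) = r(φ−θ) + (x_goal − x − r(cos φ − cos θ))/sin θ` over exit angles
`θ ∈ (0, π/2]` is minimized at `θ = π/2`. -/
theorem dubins_CS_min_at_pi_div_two
    (r φ x xgoal : ℝ) (hr : 0 < r) (hφ : φ ∈ Set.Icc 0 (π/2))
    (hxc : x + r * Real.cos φ ≤ xgoal) :
    ∀ θ ∈ Set.Ioc 0 (π/2),
      r * (φ - π/2) + (xgoal - x - r * Real.cos φ) ≤
        r * (φ - θ) + (xgoal - x - r * (Real.cos φ - Real.cos θ)) / Real.sin θ := by
  intro θ hθ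
  obtain ⟨hθ0, hθ2⟩ := hθ
  have hs : 0 < Real.sin θ :=
    Real.sin_pos_of_pos_of_lt_pi hθ0 (lt_of_le_of_lt hθ2 (by linarith [Real.pi_pos]))
  have hs1 : Real.sin θ ≤ 1 := Real.sin_le_one θ
  have hc : 0 ≤ Real.cos θ := Real.cos_nonneg_of_mem_Icc ⟨by linarith, hθ2⟩
  set d := xgoal - x - r * Real.cos φ with hd
  have hd0 : 0 ≤ d := by linarith
  have h1 : d ≤ d / Real.sin θ := by
    rw [le_div_iff₀ hs]; nlinarith
  have h2 : 0 ≤ r * Real.cos θ / Real.sin θ := by positivity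
  have h3 : (xgoal - x - r * (Real.cos φ - Real.cos θ)) / Real.sin θ
      = d / Real.sin θ + r * Real.cos θ / Real.sin θ := by
    rw [hd]; ring
  rw [h3]
  nlinarith [h1, h2]
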